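/- arXiv:1108.1075 — 2 statements merged into one kernel-verified Lean document; each statement's English description precedes it below -/
import Mathlib

section
/- Semi-strongness of extensions of partial E-fields is transitive: if F₁ ⊆ F₂ ⊆ F₃ are partial E-fields with F₁ ⩸ F₂ and F₂ ⩸ F₃, then F₁ ⩸ F₃. -/
noncomputable section
open scoped Pointwise
open Cardinal

namespace Paper

variable (F : Type*) [Field F] [CharZero F]

/-- `td F X Y` : the transcendence degree of the field `ℚ(X ∪ Y)` over `ℚ(X)`,
computed as the supremum of cardinalities of subsets of `Y` which are algebraically
independent over the subfield generated by `X`. -/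
def td (X Y : Set F) : Cardinal :=
  ⨆ p : {s : Set F // s ⊆ Y ∧
      AlgebraicIndependent (IntermediateField.adjoin ℚ X) (fun y : s => (y : F))},
    Cardinal.mk p.1

/-- Natural-number valued relative transcendence degree. -/
def tdN (X Y : Set F) : ℕ := (td F X Y).toNat

/-- `ldim F X Y` : the dimension of the quotient of the `ℚ`-span of `X ∪ Y`
by the `ℚ`-span of `X`, i.e. `ldim_ℚ(Y/X)`. -/
def ldim (X Y : Set F) : Cardinal :=
  Module.rank ℚ (Submodule.span ℚ ((Submodule.span ℚ X).mkQ '' Y))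

/-- Natural-number valued relative linear dimension. -/
def ldimN (X Y : Set F) : ℕ := (ldim F X Y).toNat

/-- The Schanuel property for a total exponential map:
`td(x̄ ∪ exp(x̄)/∅) ≥ ldim_ℚ(x̄/∅)` for every finite tuple `x̄`. -/
def Schanuel (exp : F → F) : Prop :=
  ∀ s : Finset F, ldim F ∅ ↑s ≤ td F ∅ (↑s ∪ exp '' ↑s)

/-- A partial E-field structure on a field `F` of characteristic zero: a `ℚ`-subspace
`D`, and an exponential map which is a homomorphism from `D` to `Fˣ`. -/
structure PEField (F : Type*) [Field F] [CharZero F] where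
  D : Submodule ℚ F
  exp : F → F
  exp_ne_zero : ∀ a ∈ D, exp a ≠ 0
  exp_add : ∀ a ∈ D, ∀ b ∈ D, exp (a + b) = exp a * exp b

namespace PEField

variable {F} (E : PEField F)

/-- The kernel of the exponential map, as a set. -/
def kerSet : Set F := {a | a ∈ E.D ∧ E.exp a = 1}

lemma exp_zero : E.exp 0 = 1 := by
  have h0 : (0 : F) ∈ E.D := E.D.zero_mem
  have h := E.exp_add 0 h0 0 h0
  rw [add_zero] at h
  have hne := E.exp_ne_zero 0 h0
  have h' : E.exp 0 * 1 = E.exp 0 * E.exp 0 := by rw [mul_one]; exact h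
  exact (mul_left_cancel₀ hne h').symm

/-- The kernel of the exponential map, as an additive subgroup of `F`. -/
def ker : AddSubgroup F where
  carrier := {a | a ∈ E.D ∧ E.exp a = 1}
  zero_mem' := ⟨E.D.zero_mem, E.exp_zero⟩
  add_mem' := by
    rintro a b ⟨haD, ha⟩ ⟨hbD, hb⟩
    exact ⟨E.D.add_mem haD hbD, by rw [E.exp_add a haD b hbD, ha, hb, mul_one]⟩
  neg_mem' := by
    rintro a ⟨haD, ha⟩
    refine ⟨E.D.neg_mem haD, ?_⟩
    have h := E.exp_add a haD (-a) (E.D.neg_mem haD)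
    rw [add_neg_cancel, E.exp_zero, ha, one_mul] at h
    exact h.symm

/-- The image `I(F)` of the exponential map. -/
def img : Set F := E.exp '' (E.D : Set F)

/-- `F` has full kernel iff every root of unity lies in the image of `exp`. -/
def FullKernel : Prop :=
  ∀ x : F, (∃ m : ℕ, 0 < m ∧ x ^ m = 1) → x ∈ E.exp '' (E.D : Set F)

/-- `F` has very full kernel iff every coherent system of roots of unity is of the
form `(exp (a/m))_{m ≥ 1}` for some `a ∈ D(F)`. -/
def VeryFullKernel : Prop :=
  ∀ c : ℕ → F, c 1 = 1 → (∀ r m : ℕ, 0 < r → 0 < m → c (r * m) ^ r = c m) →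
    ∃ a ∈ E.D, ∀ m : ℕ, 0 < m → E.exp (a / (m : F)) = c m

end PEField

/-- A partial E-subfield of a partial E-field: a subfield together with a `ℚ`-subspace
of `D(F)` contained in it, closed under the exponential map. -/
structure ESub {F : Type*} [Field F] [CharZero F] (E : PEField F) where
  carrier : Subfield F
  dom : Submodule ℚ F
  dom_le : dom ≤ E.D
  dom_sub : (dom : Set F) ⊆ (carrier : Set F)
  exp_mem : ∀ a ∈ dom, E.exp a ∈ carrier

namespace ESub

variable {F : Type*} [Field F] [CharZero F] {E : PEField F}

/-- The kernel of a partial E-subfield. -/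
def kerSet (A : ESub E) : Set F := {a | a ∈ A.dom ∧ E.exp a = 1}

/-- Inclusion (extension) of partial E-subfields. -/
def le (A B : ESub E) : Prop := A.carrier ≤ B.carrier ∧ A.dom ≤ B.dom

end ESub

/-- The whole of a partial E-field, viewed as a partial E-subfield of itself. -/
def PEField.top {F : Type*} [Field F] [CharZero F] (E : PEField F) : ESub E where
  carrier := ⊤
  dom := E.D
  dom_le := le_rfl
  dom_sub := fun x _ => Subfield.mem_top x
  exp_mem := fun a _ => Subfield.mem_top _

variable {F}

/-- The relative predimension function `Δ_B(x̄/A)` for an extension `A ⊆ B` of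
partial E-(sub)fields:
`td(x̄ ∪ exp(x̄ ∩ D(B)) / A ∪ ker(B)) − ldim_ℚ(x̄ ∩ D(B) / D(A) ∪ ker(B))`. -/
def Delta (E : PEField F) (A B : ESub E) (s : Finset F) : ℤ :=
  (tdN F ((A.carrier : Set F) ∪ B.kerSet) (↑s ∪ E.exp '' (↑s ∩ (B.dom : Set F))) : ℤ) -
    (ldimN F ((A.dom : Set F) ∪ B.kerSet) (↑s ∩ (B.dom : Set F)) : ℤ)

/-- The extension `A ⊆ B` of partial E-(sub)fields is semi-strong: `Δ_B(x̄/A) ≥ 0`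
for all tuples `x̄` from `B`, and `A` is algebraically free from `ker(B)` over `ker(A)`. -/
def SemiStrong (E : PEField F) (A B : ESub E) : Prop :=
  (∀ s : Finset F, ↑s ⊆ (B.carrier : Set F) → 0 ≤ Delta E A B s) ∧
  (∀ t : Finset F, ↑t ⊆ (A.carrier : Set F) →
    tdN F (A.kerSet ∪ B.kerSet) ↑t = tdN F A.kerSet ↑t)

/-- The predimension `δ(ā/X)` of a finite tuple over a subset `X` of a partial E-field:
`td(ā ∪ exp(ā ∩ D) / X ∪ exp(X ∩ D)) − ldim_ℚ(ā/X)`. -/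
def deltaSet (E : PEField F) (X : Set F) (s : Finset F) : ℤ :=
  (tdN F (X ∪ E.exp '' (X ∩ (E.D : Set F))) (↑s ∪ E.exp '' (↑s ∩ (E.D : Set F))) : ℤ) -
    (ldimN F X ↑s : ℤ)

lemma span_le_subfield {K : Subfield F} {S : Set F} (h : S ⊆ (K : Set F)) :
    ((Submodule.span ℚ S : Submodule ℚ F) : Set F) ⊆ (K : Set F) := by
  intro x hx
  induction hx using Submodule.span_induction with
  | mem x hx => exact h hx
  | zero => exact zero_mem K
  | add x y _ _ hx hy => exact add_mem hx hy
  | smul q x _ hx => rw [Rat.smul_def]; exact mul_mem (SubfieldClass.ratCast_mem K q) hx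

/-- The partial E-subfield `⟨X⟩_F` generated by a subset `X`: its domain is
`span_ℚ(X ∩ D(F))` and its field is generated by `X ∪ exp(span_ℚ(X ∩ D(F)))`. -/
def genSub (E : PEField F) (X : Set F) : ESub E where
  carrier := Subfield.closure
    (X ∪ E.exp '' ((Submodule.span ℚ (X ∩ (E.D : Set F)) : Submodule ℚ F) : Set F))
  dom := Submodule.span ℚ (X ∩ (E.D : Set F))
  dom_le := Submodule.span_le.mpr Set.inter_subset_right
  dom_sub := by
    refine span_le_subfield ?_
    intro x hx
    exact Subfield.subset_closure (Set.mem_union_left _ hx.1)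
  exp_mem := fun a ha => Subfield.subset_closure (Set.mem_union_right _ ⟨a, ha, rfl⟩)

/-- `Δ_F(x̄/B)` for an arbitrary subset `B` : the predimension of `x̄` over the partial
E-subfield `⟨ker(F) ∪ B⟩_F`. -/
def DeltaOver (E : PEField F) (B : Set F) (s : Finset F) : ℤ :=
  Delta E (genSub E (E.kerSet ∪ B)) E.top s

/-- The natural map `Fˣ → ℚ ⊗[ℤ] Additive Fˣ`. -/
def toQV : Fˣ → TensorProduct ℤ ℚ (Additive Fˣ) :=
  fun u => TensorProduct.tmul ℤ (1 : ℚ) (Additive.ofMul u)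

/-- The multiplicative rank `mrk(B/H)` : the dimension of the `ℚ`-span of the image of
`B` in `ℚ ⊗_ℤ Fˣ`, modulo the `ℚ`-span of the image of `H`. -/
def mrk (H B : Set Fˣ) : ℕ :=
  (Module.rank ℚ (Submodule.span ℚ
    ((Submodule.span ℚ (toQV '' H)).mkQ '' (toQV '' B)))).toNat

/-- The set of units lying in a given subset of `F`. -/
def unitsOf (S : Set F) : Set Fˣ := {u : Fˣ | (u : F) ∈ S}

/-- The partial E-subfield with underlying set `X` and domain `DX` is semi-strong in
the partial E-field `E`. -/
def SemiStrongSet (E : PEField F) (X DX : Set F) : Prop :=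
  (∀ s : Finset F,
    0 ≤ (tdN F (X ∪ E.kerSet) (↑s ∪ E.exp '' (↑s ∩ (E.D : Set F))) : ℤ) -
        (ldimN F (DX ∪ E.kerSet) (↑s ∩ (E.D : Set F)) : ℤ)) ∧
  (∀ t : Finset F, ↑t ⊆ X →
    tdN F ({a ∈ DX | E.exp a = 1} ∪ E.kerSet) ↑t = tdN F {a ∈ DX | E.exp a = 1} ↑t)

/-- An ELA-field: an algebraically closed field of characteristic zero together with a
total exponential map which is surjective onto the multiplicative group. -/
structure ELAField (K : Type*) [Field K] [CharZero K] where
  exp : K → K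
  exp_ne_zero : ∀ x, exp x ≠ 0
  exp_add : ∀ x y, exp (x + y) = exp x * exp y
  alg_closed : IsAlgClosed K
  exp_surj : ∀ y : K, y ≠ 0 → ∃ x, exp x = y

/-- An ELA-field regarded as a (total) partial E-field. -/
def ELAField.toPE {K : Type*} [Field K] [CharZero K] (L : ELAField K) : PEField K :=
  ⟨⊤, L.exp, fun a _ => L.exp_ne_zero a, fun a _ b _ => L.exp_add a b⟩

/-- `S` is an ELA-closed subfield of the ELA-field `K`: it is (the underlying set of) a
subfield, closed under `exp`, contains an `exp`-preimage of each of its nonzero elements,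
and is relatively algebraically closed in `K`. -/
def IsELASub {K : Type*} [Field K] [CharZero K] (L : ELAField K) (S : Set K) : Prop :=
  (∃ Sf : Subfield K, (Sf : Set K) = S) ∧
  (∀ x ∈ S, L.exp x ∈ S) ∧
  (∀ y ∈ S, y ≠ 0 → ∃ x ∈ S, L.exp x = y) ∧
  (∀ x : K, ∀ p : Polynomial K, p ≠ 0 → (∀ i, p.coeff i ∈ S) →
    Polynomial.eval x p = 0 → x ∈ S)

/-- `S = ⟨A⟩^{ELA}_K` : `S` is the smallest ELA-closed subfield of `K` containing `A`. -/
def IsELAGen {K : Type*} [Field K] [CharZero K] (L : ELAField K) (A S : Set K) : Prop :=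
  IsELASub L S ∧ A ⊆ S ∧ ∀ T : Set K, IsELASub L T → A ⊆ T → S ⊆ T


/-! Transcendence degree over `ℚ(X)` is the rank function of the algebraic matroid of `F` over
`ℚ(X)`, whose closure of `S` consists of the elements algebraic over `ℚ(X ∪ S)`. Enlarging the
base from `X` to `X ∪ Y` therefore acts like contracting `Y`, which gives additivity
`td(Y ∪ Z / X) = td(Y / X) + td(Z / X ∪ Y)` and finite character of `td` in the base.

Let `x̄ ⊆ F₃` and `ā = x̄ ∩ D(F₃)`. Pick `b̄` with `|b̄| ≤ ldim(ā / D(F₂) ∪ ker F₃)` such that each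
`a ∈ ā` is `v_a + w_a` with `v_a ∈ D(F₂)` and `w_a ∈ span(ker F₃ ∪ b̄)`, and let `c̄ = (v_a)_a`;
then `ldim(ā / D(F₁) ∪ ker F₃) ≤ ldim(ā / D(F₂) ∪ ker F₃) + ldim(c̄ / D(F₁) ∪ ker F₃)`. As
`c̄ ⊆ span(ā ∪ ker F₃)`, and a power of the exponential of a `ℚ`-combination is a product of
integer powers of exponentials, `c̄ ∪ exp(c̄)` is algebraic over `F₁ ∪ ker F₃ ∪ x̄ ∪ exp(ā)`.
Additivity then gives `Δ_{F₃}(x̄/F₁) ≥ Δ_{F₂}(c̄/F₁) + Δ_{F₃}(x̄/F₂) ≥ 0`, once `ker F₂` is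
replaced by `ker F₃` in the base of `td(c̄ ∪ exp(c̄) / F₁ ∪ ker F₂)`. This is allowed because `F₂`
is algebraically free from `ker F₃` over `ker F₂`, and by finite character it is enough to know
this freeness for finite subsets of `F₂`.
-/

section Matroid

variable {α : Type*} {M N : Matroid α} {I Y Z : Set α}
open Matroid

theorem _root_.Matroid.Indep.of_closure_subset (hE : N.E ⊆ M.E)
    (h : ∀ S, M.closure S ⊆ N.closure S) (hI : N.Indep I) : M.Indep I :=
  (indep_iff_forall_notMem_closure_sdiff (hI.subset_ground.trans hE)).2 fun _ he hcl =>
    hI.notMem_closure_sdiff_of_mem he (h _ hcl)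

theorem _root_.Matroid.eRk_le_eRk_of_closure_subset (hE : N.E ⊆ M.E)
    (h : ∀ S, M.closure S ⊆ N.closure S) (X : Set α) : N.eRk X ≤ M.eRk X := by
  obtain ⟨I, hI⟩ := N.exists_isBasis' X
  rw [← hI.encard_eq_eRk]
  exact (hI.indep.of_closure_subset hE h).encard_le_eRk_of_subset hI.subset

theorem _root_.Matroid.eRk_union_eq_add_of_closure_eq (hE : N.E = M.E)
    (h : ∀ S, N.closure S = M.closure (Y ∪ S)) (hY : Y ⊆ M.E) (hZ : Z ⊆ M.E) :
    M.eRk (Y ∪ Z) = M.eRk Y + N.eRk Z := by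
  obtain ⟨I, hI⟩ := M.exists_isBasis Y
  obtain ⟨J, hJ⟩ := N.exists_isBasis Z (hE ▸ hZ)
  have hJcl : ∀ e ∈ J, e ∉ M.closure (Y ∪ (J \ {e})) := fun e he hcl =>
    hJ.indep.notMem_closure_sdiff_of_mem he (h _ ▸ hcl)
  have hdisj : Disjoint I J := Set.disjoint_right.2 fun e he heI =>
    hJcl e he (M.subset_closure_of_subset' (Set.subset_union_of_subset_left hI.subset _)
      hI.indep.subset_ground heI)
  have hind : M.Indep (I ∪ J) := by
    rw [hI.indep.union_indep_iff_contract_indep, hdisj.sdiff_eq_right,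
      indep_iff_forall_notMem_closure_sdiff ?_]
    · intro e he hcl
      rw [contract_closure_eq] at hcl
      exact hJcl e he (M.closure_subset_closure
        (Set.union_comm Y _ ▸ Set.union_subset_union_right _ hI.subset) hcl.1)
    · rw [contract_ground]
      exact Set.subset_sdiff.2 ⟨hE ▸ hJ.indep.subset_ground, hdisj.symm⟩
  have hbasis : M.IsBasis (I ∪ J) (Y ∪ Z) := by
    refine hind.isBasis_of_subset_of_subset_closure (Set.union_subset_union hI.subset hJ.subset)
      (Set.union_subset ?_ ?_)
    · exact hI.subset_closure.trans (M.closure_subset_closure Set.subset_union_left)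
    · refine hJ.subset_closure.trans ?_
      rw [h, ← M.closure_union_closure_left_eq, ← hI.closure_eq_closure,
        M.closure_union_closure_left_eq]
  rw [← hbasis.encard_eq_eRk, Set.encard_union_eq hdisj, hI.encard_eq_eRk, hJ.encard_eq_eRk]

end Matroid

section AlgebraicMatroid

variable {F : Type*} [Field F] [CharZero F] {X X' Y W : Set F}
open IntermediateField

abbrev algMatroid (X : Set F) : Matroid F := AlgebraicIndependent.matroid (adjoin ℚ X) F

theorem mem_closure_algMatroid {S : Set F} {a : F} :
    a ∈ (algMatroid X).closure S ↔ IsAlgebraic (adjoin ℚ (X ∪ S)) a := by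
  rw [AlgebraicIndependent.matroid_closure_eq, SetLike.mem_coe, Subalgebra.mem_algebraicClosure,
    ← isAlgebraic_adjoin_iff, ← adjoin_adjoin_left]
  rfl

theorem closure_algMatroid_union (X Y S : Set F) :
    (algMatroid (X ∪ Y)).closure S = (algMatroid X).closure (Y ∪ S) := by
  ext a
  rw [mem_closure_algMatroid, mem_closure_algMatroid, Set.union_assoc]

theorem closure_algMatroid_mono (h : X ⊆ X') (S : Set F) :
    (algMatroid X).closure S ⊆ (algMatroid X').closure S := by
  rw [← Set.union_eq_right.2 h, closure_algMatroid_union]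
  exact Matroid.closure_subset_closure _ Set.subset_union_right

theorem eRk_algMatroid_anti (h : X ⊆ X') (Y : Set F) :
    (algMatroid X').eRk Y ≤ (algMatroid X).eRk Y :=
  Matroid.eRk_le_eRk_of_closure_subset (M := algMatroid X) (by simp)
    (closure_algMatroid_mono h) Y

theorem eRk_algMatroid_union (X Y Z : Set F) :
    (algMatroid X).eRk (Y ∪ Z) = (algMatroid X).eRk Y + (algMatroid (X ∪ Y)).eRk Z :=
  Matroid.eRk_union_eq_add_of_closure_eq (by simp) (closure_algMatroid_union X Y)
    (Set.subset_univ Y) (Set.subset_univ Z)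

theorem eRk_algMatroid_union_of_subset_closure (h : W ⊆ (algMatroid X).closure Y) :
    (algMatroid X).eRk (Y ∪ W) = (algMatroid X).eRk Y := by
  refine le_antisymm ?_ ((algMatroid X).eRk_mono Set.subset_union_left)
  calc (algMatroid X).eRk (Y ∪ W) ≤ (algMatroid X).eRk (Y ∪ (algMatroid X).closure Y) :=
        (algMatroid X).eRk_mono (Set.union_subset_union_right _ h)
    _ = (algMatroid X).eRk Y := by rw [Matroid.eRk_union_closure_right_eq, Set.union_self]

theorem exists_finite_eRk_algMatroid_le (C X : Set F) (hW : W.Finite) :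
    ∃ t ⊆ X, t.Finite ∧ (algMatroid (C ∪ t)).eRk W ≤ (algMatroid (C ∪ X)).eRk W := by
  obtain ⟨J, hJ⟩ := (algMatroid (C ∪ X)).exists_isBasis' W
  have hWJ : W ⊆ (algMatroid C).closure (X ∪ J) := by
    rw [← closure_algMatroid_union]
    exact hJ.isBasis_inter_ground.subset_closure.trans' (by simp)
  obtain ⟨I, hIXJ, hIfin, -, hWI⟩ := Matroid.exists_subset_finite_closure_of_subset_closure hW hWJ
  refine ⟨I ∩ X, Set.inter_subset_right, hIfin.inter_of_left X, ?_⟩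
  have hWJ' : W ⊆ (algMatroid (C ∪ (I ∩ X))).closure J := by
    rw [closure_algMatroid_union]
    refine hWI.trans (Matroid.closure_subset_closure _ fun x hx => ?_)
    by_cases hxX : x ∈ X
    · exact Or.inl ⟨hx, hxX⟩
    · exact Or.inr ((hIXJ hx).resolve_left hxX)
  calc (algMatroid (C ∪ (I ∩ X))).eRk W
      ≤ (algMatroid (C ∪ (I ∩ X))).eRk ((algMatroid (C ∪ (I ∩ X))).closure J) :=
        (algMatroid _).eRk_mono hWJ'
    _ ≤ J.encard := by rw [Matroid.eRk_closure_eq]; exact Matroid.eRk_le_encard _ _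
    _ = (algMatroid (C ∪ X)).eRk W := hJ.encard_eq_eRk

theorem td_eq_cRk (X Y : Set F) : td F X Y = (algMatroid X).cRk Y := by
  rw [td, Matroid.cRk, Matroid.cRank_eq_iSup_cardinalMk_indep]
  exact (Equiv.subtypeEquivRight fun s => by rw [Matroid.restrict_indep_iff, and_comm]; rfl)
    |>.iSup_congr fun _ => rfl

theorem natCast_tdN (X : Set F) (hY : Y.Finite) : (tdN F X Y : ℕ∞) = (algMatroid X).eRk Y := by
  rw [tdN, td_eq_cRk, ← Cardinal.toNat_toENat, Matroid.toENat_cRk_eq, ENat.natCast_toNat]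
  exact ((algMatroid X).eRk_le_encard Y).trans_lt hY.encard_lt_top |>.ne

end AlgebraicMatroid

section TranscendenceDegree

variable {F : Type*} [Field F] [CharZero F] {X X' Y Z W : Set F}
open IntermediateField

theorem tdN_anti_left (h : X ⊆ X') (hY : Y.Finite) : tdN F X' Y ≤ tdN F X Y := by
  have := eRk_algMatroid_anti h Y
  rwa [← natCast_tdN X hY, ← natCast_tdN X' hY, Nat.cast_le] at this

theorem tdN_add_tdN_union (X : Set F) (hY : Y.Finite) (hZ : Z.Finite) :
    tdN F X Y + tdN F (X ∪ Y) Z = tdN F X (Y ∪ Z) := by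
  have := eRk_algMatroid_union X Y Z
  rw [← natCast_tdN X (hY.union hZ), ← natCast_tdN X hY, ← natCast_tdN _ hZ] at this
  exact_mod_cast this.symm

theorem tdN_union_of_isAlgebraic (hY : Y.Finite) (hW : W.Finite)
    (h : ∀ w ∈ W, IsAlgebraic (adjoin ℚ (X ∪ Y)) w) : tdN F X (Y ∪ W) = tdN F X Y := by
  have := eRk_algMatroid_union_of_subset_closure fun w hw => mem_closure_algMatroid.2 (h w hw)
  rwa [← natCast_tdN X (hY.union hW), ← natCast_tdN X hY, Nat.cast_inj] at this

theorem exists_finite_tdN_le (C X : Set F) (hW : W.Finite) :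
    ∃ t ⊆ X, t.Finite ∧ tdN F (C ∪ t) W ≤ tdN F (C ∪ X) W := by
  obtain ⟨t, htX, ht, hle⟩ := exists_finite_eRk_algMatroid_le C X hW
  exact ⟨t, htX, ht, by rwa [← natCast_tdN _ hW, ← natCast_tdN _ hW, Nat.cast_le] at hle⟩

theorem tdN_le_tdN_union_of_free {A B K K' : Set F} (hBA : B ⊆ A) (hWA : W ⊆ A) (hW : W.Finite)
    (hfree : ∀ T ⊆ A, T.Finite → tdN F (K ∪ K') T = tdN F K T) :
    tdN F (B ∪ K) W ≤ tdN F (B ∪ K ∪ K') W := by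
  obtain ⟨t, htB, ht, hle⟩ := exists_finite_tdN_le (K ∪ K') B hW
  -- `td(W / K ∪ t) = td(t ∪ W / K) - td(t / K)` only involves finite subsets of `A`
  have hK := tdN_add_tdN_union K ht hW
  have hKK' := tdN_add_tdN_union (K ∪ K') ht hW
  rw [hfree t (htB.trans hBA) ht, hfree _ (Set.union_subset (htB.trans hBA) hWA) (ht.union hW)]
    at hKK'
  calc tdN F (B ∪ K) W ≤ tdN F (K ∪ t) W :=
        tdN_anti_left (Set.union_comm B K ▸ Set.union_subset_union_right K htB) hW
    _ = tdN F (K ∪ K' ∪ t) W := by omega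
    _ ≤ tdN F (K ∪ K' ∪ B) W := hle
    _ = tdN F (B ∪ K ∪ K') W := by rw [Set.union_comm _ B, Set.union_assoc]

theorem tdN_add_tdN_le_of_isAlgebraic (hY : Y.Finite) (hW : W.Finite) (hXW : X ∪ W ⊆ X')
    (h : ∀ w ∈ W, IsAlgebraic (adjoin ℚ (X ∪ Y)) w) : tdN F X W + tdN F X' Y ≤ tdN F X Y :=
  calc tdN F X W + tdN F X' Y ≤ tdN F X W + tdN F (X ∪ W) Y := by
        gcongr; exact tdN_anti_left hXW hY
    _ = tdN F X Y := by
        rw [tdN_add_tdN_union X hW hY, Set.union_comm, tdN_union_of_isAlgebraic hY hW h]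

end TranscendenceDegree

section LinearDimension

variable {F : Type*} [Field F] [CharZero F] {X X' Y Z : Set F}
open Submodule Set

theorem ldimN_eq_finrank (X Y : Set F) :
    ldimN F X Y = Module.finrank ℚ (span ℚ ((span ℚ X).mkQ '' Y)) := rfl

theorem mkQ_mem_span_image_iff {y : F} :
    (span ℚ X).mkQ y ∈ span ℚ ((span ℚ X).mkQ '' Z) ↔ y ∈ span ℚ (X ∪ Z) := by
  rw [← map_span, ← mem_comap, comap_map_mkQ, span_union]

theorem ldimN_le_of_subset_span (hZ : Z.Finite) (h : Y ⊆ span ℚ (X ∪ Z)) :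
    ldimN F X Y ≤ ldimN F X Z := by
  have := FiniteDimensional.span_of_finite ℚ (hZ.image (span ℚ X).mkQ)
  exact finrank_mono (span_le.2 (image_subset_iff.2 fun y hy => mkQ_mem_span_image_iff.2 (h hy)))

theorem ldimN_union_le (hY : Y.Finite) (hZ : Z.Finite) :
    ldimN F X (Y ∪ Z) ≤ ldimN F X Y + ldimN F X Z := by
  have := FiniteDimensional.span_of_finite ℚ (hY.image (span ℚ X).mkQ)
  have := FiniteDimensional.span_of_finite ℚ (hZ.image (span ℚ X).mkQ)
  rw [ldimN_eq_finrank, image_union, span_union]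
  exact finrank_add_le_finrank_add_finrank _ _

theorem ldimN_le_card (X : Set F) (b : Finset F) : ldimN F X b ≤ b.card := by
  classical
  rw [ldimN_eq_finrank, ← Finset.coe_image]
  exact (finrank_span_finset_le_card _).trans Finset.card_image_le

theorem ldimN_anti_left (h : X ⊆ X') (hY : Y.Finite) : ldimN F X' Y ≤ ldimN F X Y := by
  have := FiniteDimensional.span_of_finite ℚ (hY.image (span ℚ X).mkQ)
  rw [ldimN_eq_finrank, ldimN_eq_finrank, ← factor_comp_mk (span_mono h), LinearMap.coe_comp,
    image_comp, span_image]
  exact finrank_map_le _ _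

theorem exists_finset_card_le_ldimN (X : Set F) (hY : Y.Finite) :
    ∃ b : Finset F, b.card ≤ ldimN F X Y ∧ ↑b ⊆ (span ℚ Y : Set F) ∧ Y ⊆ span ℚ (X ∪ b) := by
  classical
  have := FiniteDimensional.span_of_finite ℚ (hY.image (span ℚ X).mkQ)
  let β := Module.finBasis ℚ (span ℚ ((span ℚ X).mkQ '' Y))
  have hlift : ∀ i, ∃ x ∈ span ℚ Y, (span ℚ X).mkQ x = β i := fun i => by
    simpa [← map_span] using (β i).2
  choose x hxY hxq using hlift
  have hβ : span ℚ (range fun i => (β i : F ⧸ span ℚ X)) = span ℚ ((span ℚ X).mkQ '' Y) := by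
    rw [range_comp']
    exact (span_image (span ℚ _).subtype).trans (by rw [β.span_eq, map_subtype_top])
  refine ⟨Finset.univ.image x, Finset.card_image_le.trans_eq (by simp [ldimN_eq_finrank]), ?_,
    fun y hy => ?_⟩
  · simpa [range_subset_iff] using hxY
  · rw [SetLike.mem_coe, ← mkQ_mem_span_image_iff, Finset.coe_image, Finset.coe_univ,
      image_univ, ← range_comp, Function.comp_def]
    simp_rw [hxq, hβ]
    exact subset_span ⟨y, hy, rfl⟩

theorem exists_subset_ldimN_le_add (V : Submodule ℚ F) (K : Set F) {P : Set F} (hP : P.Finite) :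
    ∃ c ⊆ (V : Set F), c.Finite ∧ c ⊆ span ℚ (P ∪ K) ∧
      ∀ X, K ⊆ X → ldimN F X P ≤ ldimN F (V ∪ K) P + ldimN F X c := by
  obtain ⟨b, hbcard, hbP, hPb⟩ := exists_finset_card_le_ldimN ((V : Set F) ∪ K) hP
  have hdec : ∀ p ∈ P, ∃ v ∈ V, ∃ w ∈ span ℚ (K ∪ b), v + w = p := fun p hp => by
    have := hPb hp
    rwa [union_assoc, span_union, span_eq, SetLike.mem_coe, mem_sup] at this
  choose v hvV w hw hvw using hdec
  have : Finite P := hP.to_subtype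
  set c := range fun p : P => v p p.2
  have hc : c.Finite := finite_range _
  refine ⟨c, range_subset_iff.2 fun p => hvV _ _, hc, range_subset_iff.2 fun p => ?_,
    fun X hKX => ?_⟩
  · have hKb : K ∪ b ⊆ span ℚ (P ∪ K) :=
      union_subset (subset_union_right.trans subset_span)
        (hbP.trans (span_mono subset_union_left))
    rw [eq_sub_of_add_eq (hvw _ _)]
    exact sub_mem (subset_span (Or.inl p.2)) (span_le.2 hKb (hw _ _))
  · have hPbc : P ⊆ span ℚ (X ∪ (↑b ∪ c)) := fun p hp => hvw p hp ▸
      add_mem (subset_span (Or.inr (Or.inr ⟨⟨p, hp⟩, rfl⟩)))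
        (span_mono (union_subset_union hKX subset_union_left) (hw p hp))
    calc ldimN F X P ≤ ldimN F X (↑b ∪ c) :=
          ldimN_le_of_subset_span (b.finite_toSet.union hc) hPbc
      _ ≤ ldimN F X b + ldimN F X c := ldimN_union_le b.finite_toSet hc
      _ ≤ ldimN F (V ∪ K) P + ldimN F X c := by
          gcongr; exact (ldimN_le_card X b).trans hbcard

end LinearDimension

namespace PEField

variable {F : Type*} [Field F] [CharZero F] (E : PEField F)

def expHom : E.D →+ Additive Fˣ where
  toFun a := Additive.ofMul (Units.mk0 (E.exp a) (E.exp_ne_zero a a.2))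
  map_zero' := by ext; exact E.exp_zero
  map_add' a b := by ext; exact E.exp_add a a.2 b b.2

theorem exp_zsmul {a : F} (ha : a ∈ E.D) (n : ℤ) : E.exp (n • a) = E.exp a ^ n := by
  have := congrArg (fun u : Additive Fˣ => ((u.toMul : Fˣ) : F)) (map_zsmul E.expHom n ⟨a, ha⟩)
  simpa [expHom] using this

theorem isAlgebraic_exp_of_mem_span {L : IntermediateField ℚ F} {Z : Set F} (hZ : Z ⊆ E.D)
    (hZL : E.exp '' Z ⊆ L) {y : F} (hy : y ∈ Submodule.span ℚ Z) : IsAlgebraic L (E.exp y) := by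
  rw [← mem_algebraicClosure_iff]
  have hD : Submodule.span ℚ Z ≤ E.D := Submodule.span_le.2 hZ
  induction hy using Submodule.span_induction with
  | mem z hz =>
    exact mem_algebraicClosure_iff.2 (isAlgebraic_algebraMap (⟨_, hZL ⟨z, hz, rfl⟩⟩ : L))
  | zero => rw [E.exp_zero]; exact one_mem _
  | add x y hx hy ihx ihy => rw [E.exp_add x (hD hx) y (hD hy)]; exact mul_mem ihx ihy
  | smul q x hx ih =>
    have hden : (q.den : ℤ) • q • x = q.num • x := by
      rw [← Int.cast_smul_eq_zsmul ℚ, ← Int.cast_smul_eq_zsmul ℚ, smul_smul, Int.cast_natCast,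
        Rat.den_mul_eq_num]
    have hpow : E.exp (q • x) ^ q.den = E.exp x ^ q.num := by
      rw [← zpow_natCast, ← E.exp_zsmul (E.D.smul_mem q (hD hx)), hden, E.exp_zsmul (hD hx)]
    refine mem_algebraicClosure_iff.2 (IsAlgebraic.of_pow q.pos ?_)
    rw [← mem_algebraicClosure_iff, hpow]
    exact zpow_mem ih _

end PEField

section SemiStrong

variable {F : Type*} [Field F] [CharZero F] {E : PEField F}
open IntermediateField

theorem ESub.le.kerSet_subset {A B : ESub E} (h : A.le B) : A.kerSet ⊆ B.kerSet :=
  fun _ hx => ⟨h.2 hx.1, hx.2⟩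

theorem delta_nonneg_iff {A B : ESub E} {s : Finset F} : 0 ≤ Delta E A B s ↔
    ldimN F (A.dom ∪ B.kerSet) (↑s ∩ B.dom) ≤
      tdN F (A.carrier ∪ B.kerSet) (↑s ∪ E.exp '' (↑s ∩ B.dom)) := by
  rw [Delta, sub_nonneg, Nat.cast_le]

theorem ESub.isAlgebraic_of_subset_span (B : ESub E) {X S P c : Set F} (hPB : P ⊆ B.dom)
    (hPS : P ∪ E.exp '' P ⊆ S) (hX : B.kerSet ⊆ X) (hc : c ⊆ Submodule.span ℚ (P ∪ B.kerSet)) :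
    ∀ w ∈ c ∪ E.exp '' c, IsAlgebraic (adjoin ℚ (X ∪ S)) w := by
  have hZL : P ∪ B.kerSet ⊆ adjoin ℚ (X ∪ S) := fun z hz =>
    subset_adjoin ℚ _ (hz.elim (fun hz => Or.inr (hPS (Or.inl hz))) fun hz => Or.inl (hX hz))
  have hexp : E.exp '' (P ∪ B.kerSet) ⊆ adjoin ℚ (X ∪ S) := by
    rintro _ ⟨z, hz | hz, rfl⟩
    · exact subset_adjoin ℚ _ (Or.inr (hPS (Or.inr ⟨z, hz, rfl⟩)))
    · rw [hz.2]; exact one_mem _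
  rintro w (hw | ⟨y, hy, rfl⟩)
  · exact isAlgebraic_algebraMap (⟨w, span_le_subfield hZL (hc hw)⟩ : adjoin ℚ (X ∪ S))
  · exact E.isAlgebraic_exp_of_mem_span
      (Set.union_subset (hPB.trans B.dom_le) fun z hz => B.dom_le hz.1) hexp (hc hy)

variable {F₁ F₂ F₃ : ESub E}

theorem delta_nonneg_of_semiStrong_of_semiStrong (h12 : F₁.le F₂) (h23 : F₂.le F₃)
    (hs12 : SemiStrong E F₁ F₂) (hs23 : SemiStrong E F₂ F₃) {s : Finset F}
    (hs : ↑s ⊆ (F₃.carrier : Set F)) : 0 ≤ Delta E F₁ F₃ s := by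
  have hK23 := h23.kerSet_subset
  set P := ↑s ∩ (F₃.dom : Set F)
  set S := ↑s ∪ E.exp '' P
  have hP : P.Finite := s.finite_toSet.inter_of_left _
  have hS : S.Finite := s.finite_toSet.union (hP.image _)
  obtain ⟨c, hcD, hc, hcP, hldim⟩ := exists_subset_ldimN_le_add F₂.dom F₃.kerSet hP
  set W := c ∪ E.exp '' c
  have hW : W.Finite := hc.union (hc.image _)
  have hWA : W ⊆ F₂.carrier := Set.union_subset (hcD.trans F₂.dom_sub)
    (Set.image_subset_iff.2 fun x hx => F₂.exp_mem x (hcD hx))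
  have h23s : ldimN F (F₂.dom ∪ F₃.kerSet) P ≤ tdN F (F₂.carrier ∪ F₃.kerSet) S :=
    delta_nonneg_iff.1 (hs23.1 s hs)
  have h12c : ldimN F (F₁.dom ∪ F₂.kerSet) c ≤ tdN F (F₁.carrier ∪ F₂.kerSet) W := by
    simpa [Set.inter_eq_left.2 hcD] using
      delta_nonneg_iff.1 (hs12.1 hc.toFinset (by simpa using hcD.trans F₂.dom_sub))
  have hswap : tdN F (F₁.carrier ∪ F₂.kerSet) W ≤ tdN F (F₁.carrier ∪ F₃.kerSet) W := by
    refine (tdN_le_tdN_union_of_free h12.1 hWA hW fun T hTA hT => ?_).trans_eq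
      (by rw [Set.union_assoc, Set.union_eq_right.2 hK23])
    simpa using hs23.2 hT.toFinset (by simpa)
  have habs : tdN F (F₁.carrier ∪ F₃.kerSet) W + tdN F (F₂.carrier ∪ F₃.kerSet) S ≤
      tdN F (F₁.carrier ∪ F₃.kerSet) S := by
    refine tdN_add_tdN_le_of_isAlgebraic hS hW
      (Set.union_subset (Set.union_subset_union_left _ h12.1) (hWA.trans Set.subset_union_left))
      (F₃.isAlgebraic_of_subset_span Set.inter_subset_right ?_ Set.subset_union_right hcP)
    exact Set.union_subset_union_left _ Set.inter_subset_left
  have hmono := ldimN_anti_left (Set.union_subset_union_right (F₁.dom : Set F) hK23) hc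
  have hldimP := hldim (F₁.dom ∪ F₃.kerSet) Set.subset_union_right
  have key : ldimN F (F₁.dom ∪ F₃.kerSet) P ≤ tdN F (F₁.carrier ∪ F₃.kerSet) S := by omega
  exact delta_nonneg_iff.2 key

end SemiStrong

/-- semi-strongness is transitive. -/
theorem semiStrong_trans
    {F : Type*} [Field F] [CharZero F] (E : PEField F)
    (F₁ F₂ F₃ : ESub E)
    (h12 : F₁.le F₂) (h23 : F₂.le F₃)
    (hs12 : SemiStrong E F₁ F₂) (hs23 : SemiStrong E F₂ F₃) :
    SemiStrong E F₁ F₃ := by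
  refine ⟨fun s hs => delta_nonneg_of_semiStrong_of_semiStrong h12 h23 hs12 hs23 hs,
    fun t ht => ?_⟩
  have hK12 := h12.kerSet_subset
  have hK23 := h23.kerSet_subset
  calc tdN F (F₁.kerSet ∪ F₃.kerSet) t = tdN F (F₂.kerSet ∪ F₃.kerSet) t := by
        rw [Set.union_eq_right.2 (hK12.trans hK23), Set.union_eq_right.2 hK23]
    _ = tdN F F₂.kerSet t := hs23.2 t (ht.trans h12.1)
    _ = tdN F (F₁.kerSet ∪ F₂.kerSet) t := by rw [Set.union_eq_right.2 hK12]
    _ = tdN F F₁.kerSet t := hs12.2 t ht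

end Paper
end
end

section
/- Suppose F₁ ⊆ F₂ ⊆ F₃ are partial E-fields with F₁ ⩸ F₃ and F₂ ⩸ F₃. Then F₁ ⩸ F₂. -/
noncomputable section
open scoped Pointwise
open Cardinal

namespace Paper

variable (F : Type*) [Field F] [CharZero F]

variable {F}

/-! ### Auxiliary lemmas for Statement 11 -/

section Aux

variable {F : Type*} [Field F] [CharZero F]

/-- Algebraic independence over the field generated by a smaller set. -/
lemma algInd_of_subset {X X' : Set F} (h : X ⊆ X') {ι : Type*} {v : ι → F}
    (hv : AlgebraicIndependent (IntermediateField.adjoin ℚ X') v) :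
    AlgebraicIndependent (IntermediateField.adjoin ℚ X) v := by
  have hle : IntermediateField.adjoin ℚ X ≤ IntermediateField.adjoin ℚ X' :=
    IntermediateField.adjoin.mono _ _ _ h
  rw [algebraicIndependent_iff] at hv ⊢
  intro p hp
  let f : ↥(IntermediateField.adjoin ℚ X) →+* ↥(IntermediateField.adjoin ℚ X') :=
    (IntermediateField.inclusion hle).toRingHom
  have hfinj : Function.Injective f := f.injective
  have key : MvPolynomial.aeval v (MvPolynomial.map f p) = MvPolynomial.aeval v p := by
    rw [MvPolynomial.aeval_def, MvPolynomial.aeval_def, MvPolynomial.eval₂_map]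
    rfl
  have := hv (MvPolynomial.map f p) (by rw [key, hp])
  exact MvPolynomial.map_injective f hfinj (by simpa using this)

lemma td_nonempty (X Y : Set F) : Nonempty {s : Set F // s ⊆ Y ∧
      AlgebraicIndependent (IntermediateField.adjoin ℚ X) (fun y : s => (y : F))} := by
  refine ⟨⟨(∅ : Set F), Set.empty_subset _, ?_⟩⟩
  have : IsEmpty ((∅ : Set F)) := Set.isEmpty_coe_sort.mpr rfl
  exact algebraicIndependent_empty_type

lemma td_le_mk (X Y : Set F) : td F X Y ≤ Cardinal.mk Y := by
  have := td_nonempty (F := F) X Y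
  exact ciSup_le fun p => Cardinal.mk_le_mk_of_subset p.2.1

lemma td_mono {X Y Y' : Set F} (h : Y ⊆ Y') : td F X Y ≤ td F X Y' := by
  have := td_nonempty (F := F) X Y
  refine ciSup_le fun p => ?_
  exact le_ciSup (Cardinal.bddAbove_range _) (⟨p.1, p.2.1.trans h, p.2.2⟩ :
    {s : Set F // s ⊆ Y' ∧ AlgebraicIndependent (IntermediateField.adjoin ℚ X)
      (fun y : s => (y : F))})

lemma td_anti {X X' : Set F} (h : X ⊆ X') (Y : Set F) : td F X' Y ≤ td F X Y := by
  have := td_nonempty (F := F) X' Y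
  refine ciSup_le fun p => ?_
  exact le_ciSup (Cardinal.bddAbove_range _) (⟨p.1, p.2.1, algInd_of_subset h p.2.2⟩ :
    {s : Set F // s ⊆ Y ∧ AlgebraicIndependent (IntermediateField.adjoin ℚ X)
      (fun y : s => (y : F))})

lemma td_lt_aleph0 (X : Set F) {Y : Set F} (hY : Y.Finite) : td F X Y < Cardinal.aleph0 :=
  lt_of_le_of_lt (td_le_mk X Y) hY.lt_aleph0

lemma tdN_mono (X : Set F) {Y Y' : Set F} (h : Y ⊆ Y') (hY' : Y'.Finite) :
    tdN F X Y ≤ tdN F X Y' :=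
  Cardinal.toNat_le_toNat (td_mono h) (td_lt_aleph0 X hY')

lemma tdN_anti {X X' : Set F} (h : X ⊆ X') {Y : Set F} (hY : Y.Finite) :
    tdN F X' Y ≤ tdN F X Y :=
  Cardinal.toNat_le_toNat (td_anti h Y) (td_lt_aleph0 X hY)

/-- An element of a `ℚ`-span has a positive integer multiple in any additive subgroup
containing the spanning set. -/
lemma exists_nsmul_mem_subgroup {S : Set F} {x : F} (hx : x ∈ Submodule.span ℚ S)
    (G : AddSubgroup F) (hSG : S ⊆ G) : ∃ n : ℕ, 0 < n ∧ (n : ℚ) • x ∈ G := by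
  induction hx using Submodule.span_induction with
  | mem z hz => exact ⟨1, one_pos, by simpa using hSG hz⟩
  | zero => exact ⟨1, one_pos, by simpa using G.zero_mem⟩
  | add y z _ _ ihy ihz =>
    obtain ⟨n, hn, hny⟩ := ihy
    obtain ⟨m, hm, hmz⟩ := ihz
    refine ⟨n * m, Nat.mul_pos hn hm, ?_⟩
    have h1 : ((n * m : ℕ) : ℚ) • (y + z) = m • ((n : ℚ) • y) + n • ((m : ℚ) • z) := by
      rw [← Nat.cast_smul_eq_nsmul ℚ m, ← Nat.cast_smul_eq_nsmul ℚ n, smul_smul, smul_smul,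
        smul_add]
      push_cast
      rw [mul_comm (m : ℚ) (n : ℚ)]
    rw [h1]
    exact G.add_mem (G.nsmul_mem hny m) (G.nsmul_mem hmz n)
  | smul q y _ ih =>
    obtain ⟨n, hn, hny⟩ := ih
    refine ⟨q.den * n, Nat.mul_pos q.pos hn, ?_⟩
    have h1 : ((q.den * n : ℕ) : ℚ) • (q • y) = q.num • ((n : ℚ) • y) := by
      rw [← Int.cast_smul_eq_zsmul ℚ, smul_smul, smul_smul]
      congr 1
      push_cast
      have hq : (q.den : ℚ) * q = q.num := Rat.den_mul_eq_num q
      linear_combination (n : ℚ) * hq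
    rw [h1]
    exact G.zsmul_mem hny q.num

/-- If the spans of `X` and `X'` agree relative to a submodule `D` containing `Y`,
then the relative linear dimensions agree. -/
lemma ldim_congr {X X' : Set F} {Y : Set F} (D : Submodule ℚ F) (hY : Y ⊆ D)
    (h1 : Submodule.span ℚ X ≤ Submodule.span ℚ X')
    (h2 : ∀ x ∈ D, x ∈ Submodule.span ℚ X' → x ∈ Submodule.span ℚ X) :
    ldim F X' Y = ldim F X Y := by
  set W₁ := Submodule.span ℚ X
  set W₂ := Submodule.span ℚ X'
  have hcomap : W₁ ≤ W₂.comap LinearMap.id := h1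
  set φ : (F ⧸ W₁) →ₗ[ℚ] (F ⧸ W₂) := W₁.mapQ W₂ LinearMap.id hcomap
  have hφ : ∀ x : F, φ (W₁.mkQ x) = W₂.mkQ x := fun x => rfl
  have hYspan : Submodule.span ℚ Y ≤ D := Submodule.span_le.mpr hY
  set P : Submodule ℚ (F ⧸ W₁) := Submodule.span ℚ (W₁.mkQ '' Y)
  have hPmap : P = (Submodule.span ℚ Y).map W₁.mkQ := by
    rw [Submodule.map_span]
  have hmap : P.map φ = Submodule.span ℚ (W₂.mkQ '' Y) := by
    show Submodule.map φ (Submodule.span ℚ (W₁.mkQ '' Y)) = _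
    rw [Submodule.map_span, ← Set.image_comp]
    exact congrArg _ (Set.image_congr fun x _ => hφ x)
  have hinj : Function.Injective (φ.domRestrict P) := by
    rw [← LinearMap.ker_eq_bot]
    rw [Submodule.eq_bot_iff]
    rintro ⟨p, hp⟩ hker
    rw [hPmap] at hp
    obtain ⟨y, hy, rfl⟩ := hp
    have h0 : φ (W₁.mkQ y) = 0 := hker
    rw [hφ] at h0
    have hyW₂ : y ∈ W₂ := by rwa [Submodule.mkQ_apply, Submodule.Quotient.mk_eq_zero] at h0
    have : y ∈ W₁ := h2 y (hYspan hy) hyW₂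
    exact Subtype.ext (by simpa [Submodule.Quotient.mk_eq_zero] using this)
  have he : (↥P) ≃ₗ[ℚ] ↥(Submodule.span ℚ (W₂.mkQ '' Y)) := by
    refine (LinearEquiv.ofInjective (φ.domRestrict P) hinj).trans (LinearEquiv.ofEq _ _ ?_)
    rw [LinearMap.range_domRestrict, hmap]
  unfold ldim
  exact he.symm.rank_eq

/-- The kernel of a partial E-subfield, as an additive subgroup. -/
def ESub.kerGroup {E : PEField F} (A : ESub E) : AddSubgroup F where
  carrier := A.kerSet
  zero_mem' := ⟨A.dom.zero_mem, E.exp_zero⟩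
  add_mem' := by
    rintro a b ⟨haD, ha⟩ ⟨hbD, hb⟩
    exact ⟨A.dom.add_mem haD hbD,
      by rw [E.exp_add a (A.dom_le haD) b (A.dom_le hbD), ha, hb, mul_one]⟩
  neg_mem' := by
    rintro a ⟨haD, ha⟩
    refine ⟨A.dom.neg_mem haD, ?_⟩
    have h := E.exp_add a (A.dom_le haD) (-a) (E.D.neg_mem (A.dom_le haD))
    rw [add_neg_cancel, E.exp_zero, ha, one_mul] at h
    exact h.symm

end Aux

/-- if `F₁ ⊆ F₂ ⊆ F₃` with `F₁ ⩸ F₃` and `F₂ ⩸ F₃`, then `F₁ ⩸ F₂`. -/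
theorem semiStrong_of_semiStrong_in_larger
    {F : Type*} [Field F] [CharZero F] (E : PEField F)
    (F₁ F₂ F₃ : ESub E)
    (h12 : F₁.le F₂) (h23 : F₂.le F₃)
    (hs13 : SemiStrong E F₁ F₃) (hs23 : SemiStrong E F₂ F₃) :
    SemiStrong E F₁ F₂ := by
  classical
  obtain ⟨hs13a, hs13b⟩ := hs13
  obtain ⟨hs23a, hs23b⟩ := hs23
  have hK12 : F₁.kerSet ⊆ F₂.kerSet := fun a ha => ⟨h12.2 ha.1, ha.2⟩
  have hK23 : F₂.kerSet ⊆ F₃.kerSet := fun a ha => ⟨h23.2 ha.1, ha.2⟩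
  have hK13 : F₁.kerSet ⊆ F₃.kerSet := hK12.trans hK23
  constructor
  · -- Part 1: the predimension inequality
    intro s hs
    set s₂ : Finset F := s.filter (fun x => x ∈ F₂.dom) with hs₂def
    have hs₂coe : (↑s₂ : Set F) = ↑s ∩ (F₂.dom : Set F) := by
      ext x
      simp [hs₂def, Finset.mem_filter]
    have hs₂sub3 : (↑s₂ : Set F) ⊆ (F₃.carrier : Set F) := by
      intro x hx
      rw [hs₂coe] at hx
      exact h23.1 (hs hx.1)
    have hsub23 : (↑s₂ : Set F) ⊆ (F₃.dom : Set F) := by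
      rw [hs₂coe]
      exact fun x hx => h23.2 hx.2
    have hs₂D3 : (↑s₂ : Set F) ∩ (F₃.dom : Set F) = ↑s ∩ (F₂.dom : Set F) :=
      (Set.inter_eq_left.mpr hsub23).trans hs₂coe
    -- the instance of `F₁ ⩸ F₃` at `s₂`
    have h0 := hs13a s₂ hs₂sub3
    rw [Delta, sub_nonneg, Nat.cast_le, hs₂D3, hs₂coe] at h0
    -- h0 : ldimN F (↑F₁.dom ∪ F₃.kerSet) (↑s ∩ ↑F₂.dom)
    --        ≤ tdN F (↑F₁.carrier ∪ F₃.kerSet) ((↑s ∩ ↑F₂.dom) ∪ E.exp '' (↑s ∩ ↑F₂.dom))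
    rw [Delta, sub_nonneg, Nat.cast_le]
    -- Step (a): the two relative linear dimensions agree
    have hldim : ldimN F ((F₁.dom : Set F) ∪ F₂.kerSet) (↑s ∩ (F₂.dom : Set F)) =
        ldimN F ((F₁.dom : Set F) ∪ F₃.kerSet) (↑s ∩ (F₂.dom : Set F)) := by
      unfold ldimN
      refine congrArg Cardinal.toNat ?_
      refine (ldim_congr F₂.dom Set.inter_subset_right ?_ ?_).symm
      · exact Submodule.span_mono (Set.union_subset_union_right _ hK23)
      · intro x hxD hx
        rw [Submodule.span_union] at hx ⊢
        obtain ⟨d, hd, k, hk, rfl⟩ := Submodule.mem_sup.mp hx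
        rw [Submodule.span_eq] at hd
        have hkD2 : k ∈ F₂.dom := by
          have hdx : d + k - d ∈ F₂.dom := F₂.dom.sub_mem hxD (h12.2 hd)
          simpa using hdx
        obtain ⟨n, hn, hnk⟩ := exists_nsmul_mem_subgroup hk F₃.kerGroup (fun a ha => ha)
        have hnk2 : (n : ℚ) • k ∈ F₂.kerSet := ⟨F₂.dom.smul_mem _ hkD2, hnk.2⟩
        have hkspan : k ∈ Submodule.span ℚ F₂.kerSet := by
          have h1 : ((n : ℚ)⁻¹ • ((n : ℚ) • k)) ∈ Submodule.span ℚ F₂.kerSet :=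
            Submodule.smul_mem _ _ (Submodule.subset_span hnk2)
          rwa [smul_smul, inv_mul_cancel₀ (by exact_mod_cast hn.ne'), one_smul] at h1
        refine Submodule.mem_sup.mpr ⟨d, by rwa [Submodule.span_eq], k, hkspan, rfl⟩
    rw [hldim]
    refine le_trans h0 ?_
    -- Step (b): shrink the base and enlarge the tuple
    have hfin : ((↑s : Set F) ∪ E.exp '' (↑s ∩ (F₂.dom : Set F))).Finite :=
      s.finite_toSet.union ((s.finite_toSet.inter_of_left _).image _)
    have hfin' : (((↑s : Set F) ∩ (F₂.dom : Set F)) ∪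
        E.exp '' (↑s ∩ (F₂.dom : Set F))).Finite :=
      (s.finite_toSet.inter_of_left _).union ((s.finite_toSet.inter_of_left _).image _)
    refine le_trans (tdN_anti (Set.union_subset_union_right _ hK23) hfin') ?_
    exact tdN_mono _ (Set.union_subset_union_left _ Set.inter_subset_left) hfin
  · -- Part 2: freeness of F₁ from ker F₂ over ker F₁
    intro t ht
    have ht2 : (↑t : Set F) ⊆ (F₂.carrier : Set F) := ht.trans h12.1
    have e1 := hs13b t ht
    have e2 := hs23b t ht2
    rw [Set.union_eq_self_of_subset_left hK13] at e1
    rw [Set.union_eq_self_of_subset_left hK23] at e2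
    rw [Set.union_eq_self_of_subset_left hK12]
    -- e1 : tdN F F₃.kerSet ↑t = tdN F F₁.kerSet ↑t
    -- e2 : tdN F F₃.kerSet ↑t = tdN F F₂.kerSet ↑t
    have hle1 : tdN F F₂.kerSet ↑t ≤ tdN F F₁.kerSet ↑t := tdN_anti hK12 t.finite_toSet
    have hle2 : tdN F F₃.kerSet ↑t ≤ tdN F F₂.kerSet ↑t := tdN_anti hK23 t.finite_toSet
    omega


end Paper
end
end
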